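/- arXiv:1501.04367 — 4 statements merged into one kernel-verified Lean document; each statement's English description precedes it below -/
import Mathlib

section
/- Let E and F be real inner product spaces, let f : E → F be a map, let ε be a real number with 0 < ε < 1, and let x, y ∈ E with ‖x‖ ≤ 1 and ‖y‖ ≤ 1. If (1 − ε)·‖x − y‖² ≤ ‖f(x) − f(y)‖² ≤ (1 + ε)·‖x − y‖² and (1 − ε)·‖x + y‖² ≤ ‖f(x) + f(y)‖² ≤ (1 + ε)·‖x + y‖², then |⟨f(x), f(y)⟩ − ⟨x, y⟩| ≤ ε. -/
open scoped RealInnerProductSpace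

theorem stmt_2 {E F : Type*} [NormedAddCommGroup E] [InnerProductSpace ℝ E]
    [NormedAddCommGroup F] [InnerProductSpace ℝ F]
    (f : E → F) (ε : ℝ) (hε0 : 0 < ε) (hε1 : ε < 1)
    (x y : E) (hx : ‖x‖ ≤ 1) (hy : ‖y‖ ≤ 1)
    (hsub : (1 - ε) * ‖x - y‖ ^ 2 ≤ ‖f x - f y‖ ^ 2 ∧
      ‖f x - f y‖ ^ 2 ≤ (1 + ε) * ‖x - y‖ ^ 2)
    (hadd : (1 - ε) * ‖x + y‖ ^ 2 ≤ ‖f x + f y‖ ^ 2 ∧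
      ‖f x + f y‖ ^ 2 ≤ (1 + ε) * ‖x + y‖ ^ 2) :
    |⟪f x, f y⟫ - ⟪x, y⟫| ≤ ε := by
  obtain ⟨h1, h2⟩ := hsub
  obtain ⟨h3, h4⟩ := hadd
  have e1 : ‖x + y‖ ^ 2 = ‖x‖ ^ 2 + 2 * ⟪x, y⟫ + ‖y‖ ^ 2 := by
    rw [@norm_add_sq_real]
  have e2 : ‖x - y‖ ^ 2 = ‖x‖ ^ 2 - 2 * ⟪x, y⟫ + ‖y‖ ^ 2 := by
    rw [@norm_sub_sq_real]
  have e3 : ‖f x + f y‖ ^ 2 = ‖f x‖ ^ 2 + 2 * ⟪f x, f y⟫ + ‖f y‖ ^ 2 := by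
    rw [@norm_add_sq_real]
  have e4 : ‖f x - f y‖ ^ 2 = ‖f x‖ ^ 2 - 2 * ⟪f x, f y⟫ + ‖f y‖ ^ 2 := by
    rw [@norm_sub_sq_real]
  have hx2 : ‖x‖ ^ 2 ≤ 1 := by nlinarith [norm_nonneg x]
  have hy2 : ‖y‖ ^ 2 ≤ 1 := by nlinarith [norm_nonneg y]
  rw [abs_le]
  constructor <;> nlinarith [sq_nonneg ‖x - y‖, sq_nonneg ‖x + y‖]
end

section
/- Let P, Q, L, M, N be natural numbers with L ≤ P, M ≤ Q, let s : ℤ × ℤ × ℤ → ℝ, and let H : ℤ × ℤ × ℤ → ℝ vanish outside the index range 0 ≤ x < L, 0 ≤ y < M, 0 ≤ t < N. Fix integers l, m, n with 0 ≤ l ≤ P − L and 0 ≤ m ≤ Q − M, and define c(l, m, n) = Σ_{t=0}^{N−1} Σ_{y=0}^{M−1} Σ_{x=0}^{L−1} s(l + x, m + y, n + t)·H(x, y, t). For each t < N let S_{n+t}, H^{l,m,t} ∈ ℝ^{(Fin P × Fin Q)} be given by S_{n+t}(α, β) = s(α, β, n + t) and H^{l,m,t}(α, β) = H(α − l, β −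 m, t), and assume ‖S_{n+t}‖ ≤ 1 and ‖H^{l,m,t}‖ ≤ 1. Let φ : ℝ^{(Fin P × Fin Q)} → ℝ^K be a linear map and let 0 < ε < 1 be such that for every t < N, (1 − ε)·‖S_{n+t} ± H^{l,m,t}‖² ≤ ‖φ(S_{n+t}) ± φ(H^{l,m,t})‖² ≤ (1 + ε)·‖S_{n+t} ± H^{l,m,t}‖² (both sign choices). Then the compressed-domain response c^{comp}(l, m, n) := Σ_{t=0}^{N−1} ⟨φ(S_{n+t}), φ(H^{l,m,t})⟩ satisfies c(l, m, n) − N·ε ≤ c^{comp}(l, m, n) ≤ c(l, m, n) + N·ε. -/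
/-!
Polarization writes both inner products through the norms of `S ± H`: `4⟪u, v⟫ = ‖u + v‖² - ‖u - v‖²`.
The distance-preservation bounds therefore move `4⟪φ u, φ v⟫` away from `4⟪u, v⟫` by at most
`ε (‖u + v‖² + ‖u - v‖²) = 2ε (‖u‖² + ‖v‖²) ≤ 4ε` for unit-ball vectors, so each frame contributes
an error of at most `ε`. On the pixel side, since the filter is supported on an `L × M` window that
fits inside the frame, the inner product `⟪S_{n+t}, H^{l,m,t}⟫` is exactly the `t`-th slice of the
correlation sum `c(l, m, n)`.
-/

open scoped RealInnerProductSpace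
open Finset

theorem sum_fin_eq_sum_range_add_of_support {β : Type*} [AddCommMonoid β] {P L : ℕ} {l : ℤ}
    (hl : 0 ≤ l) (hlP : l + L ≤ P) (F : ℤ → β) (hF : ∀ α : ℤ, ¬(l ≤ α ∧ α < l + L) → F α = 0) :
    ∑ α : Fin P, F α = ∑ x ∈ range L, F (l + x) := by
  obtain ⟨a, rfl⟩ := Int.eq_ofNat_of_zero_le hl
  have hsub : Ico a (a + L) ⊆ range P := fun i hi => by
    simp only [mem_Ico, mem_range] at hi ⊢
    omega
  have hzero : ∀ i ∈ range P, i ∉ Ico a (a + L) → F i = 0 := fun i _ hi => by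
    simp only [mem_Ico] at hi
    exact hF i (by omega)
  rw [Fin.sum_univ_eq_sum_range (fun α : ℕ => F α), ← sum_subset hsub hzero,
    sum_Ico_eq_sum_range, Nat.add_sub_cancel_left]
  push_cast
  rfl

theorem sum_fin_prod_eq_sum_range_add_of_support {β : Type*} [AddCommMonoid β] {P Q L M : ℕ}
    {l m : ℤ} (hl : 0 ≤ l) (hlP : l + L ≤ P) (hm : 0 ≤ m) (hmQ : m + M ≤ Q) (F : ℤ → ℤ → β)
    (hF : ∀ α γ : ℤ, ¬(l ≤ α ∧ α < l + L ∧ m ≤ γ ∧ γ < m + M) → F α γ = 0) :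
    ∑ p : Fin P × Fin Q, F p.1 p.2 = ∑ y ∈ range M, ∑ x ∈ range L, F (l + x) (m + y) := by
  rw [Fintype.sum_prod_type, Finset.sum_comm]
  refine (sum_fin_eq_sum_range_add_of_support hm hmQ (fun γ => ∑ α : Fin P, F α γ)
    fun γ hγ => ?_).trans ?_
  · exact sum_eq_zero fun α _ => hF α γ (by tauto)
  · refine sum_congr rfl fun y _ => sum_fin_eq_sum_range_add_of_support hl hlP
      (fun α => F α (m + y)) fun α hα => ?_
    exact hF α _ (by tauto)

theorem inner_eq_sum_window {P Q L M : ℕ} {l m : ℤ} (hl : 0 ≤ l) (hlP : l + L ≤ P) (hm : 0 ≤ m)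
    (hmQ : m + M ≤ Q) (f g : ℤ → ℤ → ℝ)
    (hg : ∀ x y : ℤ, ¬(0 ≤ x ∧ x < L ∧ 0 ≤ y ∧ y < M) → g x y = 0)
    (u v : EuclideanSpace ℝ (Fin P × Fin Q)) (hu : ∀ α β, u (α, β) = f α β)
    (hv : ∀ α β, v (α, β) = g (α - l) (β - m)) :
    ⟪u, v⟫ = ∑ y ∈ range M, ∑ x ∈ range L, f (l + x) (m + y) * g x y := by
  have hsum : ⟪u, v⟫ = ∑ p : Fin P × Fin Q, f p.1 p.2 * g (p.1 - l) (p.2 - m) := by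
    refine (PiLp.inner_apply u v).trans (sum_congr rfl fun p _ => ?_)
    rw [real_inner_eq_re_inner, RCLike.inner_apply, conj_trivial, hu, hv]
    simp [mul_comm]
  rw [hsum, sum_fin_prod_eq_sum_range_add_of_support hl hlP hm hmQ
    (fun α γ => f α γ * g (α - l) (γ - m)) fun α γ h => by rw [hg _ _ (by omega), mul_zero]]
  simp only [add_sub_cancel_left]

theorem abs_inner_sub_inner_le_of_norm_sq_bounds {E F : Type*} [NormedAddCommGroup E]
    [InnerProductSpace ℝ E] [NormedAddCommGroup F] [InnerProductSpace ℝ F] {u v : E} {x y : F}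
    {ε : ℝ} (hε : 0 ≤ ε) (hu : ‖u‖ ≤ 1) (hv : ‖v‖ ≤ 1)
    (hsub : (1 - ε) * ‖u - v‖ ^ 2 ≤ ‖x - y‖ ^ 2 ∧ ‖x - y‖ ^ 2 ≤ (1 + ε) * ‖u - v‖ ^ 2)
    (hadd : (1 - ε) * ‖u + v‖ ^ 2 ≤ ‖x + y‖ ^ 2 ∧ ‖x + y‖ ^ 2 ≤ (1 + ε) * ‖u + v‖ ^ 2) :
    |⟪x, y⟫ - ⟪u, v⟫| ≤ ε := by
  have hpar : ‖u + v‖ ^ 2 + ‖u - v‖ ^ 2 = 2 * (‖u‖ ^ 2 + ‖v‖ ^ 2) := by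
    rw [norm_add_sq_real, norm_sub_sq_real]
    ring
  have hball : ε * (‖u‖ ^ 2 + ‖v‖ ^ 2) ≤ ε * 2 := by
    have := pow_le_one₀ (norm_nonneg u) hu (n := 2)
    have := pow_le_one₀ (norm_nonneg v) hv (n := 2)
    gcongr
    linarith
  rw [abs_sub_le_iff]
  constructor <;> nlinarith [hsub.1, hsub.2, hadd.1, hadd.2, norm_add_sq_real u v,
    norm_sub_sq_real u v, norm_add_sq_real x y, norm_sub_sq_real x y]

theorem stmt_6_general (P Q L M N K : ℕ)
    (s H : ℤ × ℤ × ℤ → ℝ)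
    (hH : ∀ x y t : ℤ,
      ¬(0 ≤ x ∧ x < (L : ℤ) ∧ 0 ≤ y ∧ y < (M : ℤ) ∧ 0 ≤ t ∧ t < (N : ℤ)) →
      H (x, y, t) = 0)
    (l m n : ℤ) (hl0 : 0 ≤ l) (hlP : l ≤ (P : ℤ) - (L : ℤ))
    (hm0 : 0 ≤ m) (hmQ : m ≤ (Q : ℤ) - (M : ℤ))
    (c : ℝ)
    (hc : c = ∑ t ∈ Finset.range N, ∑ y ∈ Finset.range M, ∑ x ∈ Finset.range L,
      s (l + (x : ℤ), m + (y : ℤ), n + (t : ℤ)) * H ((x : ℤ), (y : ℤ), (t : ℤ)))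
    (S Hv : ℕ → EuclideanSpace ℝ (Fin P × Fin Q))
    (hS : ∀ t < N, ∀ α : Fin P, ∀ β : Fin Q,
      S t (α, β) = s ((α : ℤ), (β : ℤ), n + (t : ℤ)))
    (hHv : ∀ t < N, ∀ α : Fin P, ∀ β : Fin Q,
      Hv t (α, β) = H ((α : ℤ) - l, (β : ℤ) - m, (t : ℤ)))
    (hSnorm : ∀ t < N, ‖S t‖ ≤ 1) (hHnorm : ∀ t < N, ‖Hv t‖ ≤ 1)
    (φ : EuclideanSpace ℝ (Fin P × Fin Q) →ₗ[ℝ] EuclideanSpace ℝ (Fin K))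
    (ε : ℝ) (hε0 : 0 < ε)
    (hJLsub : ∀ t < N, (1 - ε) * ‖S t - Hv t‖ ^ 2 ≤ ‖φ (S t) - φ (Hv t)‖ ^ 2 ∧
      ‖φ (S t) - φ (Hv t)‖ ^ 2 ≤ (1 + ε) * ‖S t - Hv t‖ ^ 2)
    (hJLadd : ∀ t < N, (1 - ε) * ‖S t + Hv t‖ ^ 2 ≤ ‖φ (S t) + φ (Hv t)‖ ^ 2 ∧
      ‖φ (S t) + φ (Hv t)‖ ^ 2 ≤ (1 + ε) * ‖S t + Hv t‖ ^ 2) :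
    c - N * ε ≤ (∑ t ∈ Finset.range N, ⟪φ (S t), φ (Hv t)⟫) ∧
      (∑ t ∈ Finset.range N, ⟪φ (S t), φ (Hv t)⟫) ≤ c + N * ε := by
  have hc_inner : c = ∑ t ∈ range N, ⟪S t, Hv t⟫ := by
    refine hc.trans (sum_congr rfl fun t ht => ?_)
    have ht : t < N := mem_range.mp ht
    refine (inner_eq_sum_window hl0 (by omega) hm0 (by omega)
      (fun α β => s (α, β, n + t)) (fun x y => H (x, y, t)) ?_ _ _ (hS t ht) (hHv t ht)).symm
    exact fun x y hxy => hH x y t fun h => hxy ⟨h.1, h.2.1, h.2.2.1, h.2.2.2.1⟩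
  have hframe : ∀ t ∈ range N, |⟪φ (S t), φ (Hv t)⟫ - ⟪S t, Hv t⟫| ≤ ε := fun t ht => by
    have ht : t < N := mem_range.mp ht
    exact abs_inner_sub_inner_le_of_norm_sq_bounds hε0.le (hSnorm t ht) (hHnorm t ht)
      (hJLsub t ht) (hJLadd t ht)
  have htotal : |∑ t ∈ range N, ⟪φ (S t), φ (Hv t)⟫ - c| ≤ N * ε := calc
    _ = |∑ t ∈ range N, (⟪φ (S t), φ (Hv t)⟫ - ⟪S t, Hv t⟫)| := by rw [hc_inner, sum_sub_distrib]
    _ ≤ ∑ t ∈ range N, ε := (abs_sum_le_sum_abs _ _).trans (sum_le_sum hframe)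
    _ = N * ε := by rw [sum_const, card_range, nsmul_eq_mul]
  constructor <;> linarith [abs_sub_le_iff.mp htotal]

theorem stmt_6 (P Q L M N K : ℕ) (hLP : L ≤ P) (hMQ : M ≤ Q)
    (s H : ℤ × ℤ × ℤ → ℝ)
    (hH : ∀ x y t : ℤ,
      ¬(0 ≤ x ∧ x < (L : ℤ) ∧ 0 ≤ y ∧ y < (M : ℤ) ∧ 0 ≤ t ∧ t < (N : ℤ)) →
      H (x, y, t) = 0)
    (l m n : ℤ) (hl0 : 0 ≤ l) (hlP : l ≤ (P : ℤ) - (L : ℤ))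
    (hm0 : 0 ≤ m) (hmQ : m ≤ (Q : ℤ) - (M : ℤ))
    (c : ℝ)
    (hc : c = ∑ t ∈ Finset.range N, ∑ y ∈ Finset.range M, ∑ x ∈ Finset.range L,
      s (l + (x : ℤ), m + (y : ℤ), n + (t : ℤ)) * H ((x : ℤ), (y : ℤ), (t : ℤ)))
    (S Hv : ℕ → EuclideanSpace ℝ (Fin P × Fin Q))
    (hS : ∀ t < N, ∀ α : Fin P, ∀ β : Fin Q,
      S t (α, β) = s ((α : ℤ), (β : ℤ), n + (t : ℤ)))
    (hHv : ∀ t < N, ∀ α : Fin P, ∀ β : Fin Q,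
      Hv t (α, β) = H ((α : ℤ) - l, (β : ℤ) - m, (t : ℤ)))
    (hSnorm : ∀ t < N, ‖S t‖ ≤ 1) (hHnorm : ∀ t < N, ‖Hv t‖ ≤ 1)
    (φ : EuclideanSpace ℝ (Fin P × Fin Q) →ₗ[ℝ] EuclideanSpace ℝ (Fin K))
    (ε : ℝ) (hε0 : 0 < ε) (hε1 : ε < 1)
    (hJLsub : ∀ t < N, (1 - ε) * ‖S t - Hv t‖ ^ 2 ≤ ‖φ (S t) - φ (Hv t)‖ ^ 2 ∧
      ‖φ (S t) - φ (Hv t)‖ ^ 2 ≤ (1 + ε) * ‖S t - Hv t‖ ^ 2)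
    (hJLadd : ∀ t < N, (1 - ε) * ‖S t + Hv t‖ ^ 2 ≤ ‖φ (S t) + φ (Hv t)‖ ^ 2 ∧
      ‖φ (S t) + φ (Hv t)‖ ^ 2 ≤ (1 + ε) * ‖S t + Hv t‖ ^ 2) :
    c - N * ε ≤ (∑ t ∈ Finset.range N, ⟪φ (S t), φ (Hv t)⟫) ∧
      (∑ t ∈ Finset.range N, ⟪φ (S t), φ (Hv t)⟫) ≤ c + N * ε :=
  stmt_6_general P Q L M N K s H hH l m n hl0 hlP hm0 hmQ c hc S Hv hS hHv hSnorm hHnorm φ ε hε0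
    hJLsub hJLadd
end

section
/- Let N_e be a positive natural number, let X₁, …, X_{N_e} : ℝ³ → ℂ, let T : ℝ³ → ℝ³ be a map, let Δ ≠ 0 be a real number, and let c : ℝ³ → ℂ satisfy |c(u)| = 1 for all u; define X̂ᵢ(u) = c(u)·Xᵢ(T u)/|Δ|. Let α, β, γ be real parameters with α > 0, β ≥ 0, γ ≥ 0, and with average spectrum M_x(u) = (1/N_e)·Σᵢ Xᵢ(u), average power spectral density D_x(u) = (1/N_e)·Σᵢ |Xᵢ(u)|², and average similarity S_x(u) = (1/N_e)·Σᵢ |Xᵢ(u) − M_x(u)|², define the MACH filter h(u) = M_x(u)/(α + β·D_x(u) + γ·S_x(u)). Let M̂_x, D̂_x, Ŝ_x be the corresponding quantities built from the X̂ᵢ, and define ĥ(u) = M̂_x(u)/(α̂ + β̂·D̂_x(u) + γ̂·Ŝ_x(u)) with parameters α̂ = α/|Δ|², β̂ = β, γ̂ = γ (note α̂ > 0, so both denominators are strictly positive). Then for every u ∈ ℝ³, ĥ(u) = |Δ| · c(u) · h(T u). -/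
/-!
All three statistics of the MACH filter are homogeneous in the training spectra: replacing every
`Xᵢ(u)` by `a · Xᵢ(u)` multiplies the average spectrum by `a` and the power spectral density and
the similarity by `‖a‖²`. So if the noise weight is rescaled by `‖a‖²` as well, the whole
denominator picks up the factor `‖a‖²` and the filter is multiplied by `a / ‖a‖²`. The affine
transformation acts at frequency `u` as the scalar `a = c(u) / |Δ|` on the spectra at `T u`, and
`a / ‖a‖² = |Δ| c(u)` because `‖c(u)‖ = 1`.
-/

noncomputable section

variable {𝕜 : Type*} [RCLike 𝕜]

theorem div_ofReal_div_norm_sq {c : 𝕜} (hc : ‖c‖ = 1) (d : ℝ) :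
    c / d / ((‖c / d‖ ^ 2 : ℝ) : 𝕜) = d * c := by
  rcases eq_or_ne d 0 with rfl | hd
  · simp
  · have hdK : (d : 𝕜) ≠ 0 := RCLike.ofReal_ne_zero.mpr hd
    rw [norm_div, hc, RCLike.norm_ofReal, div_pow, sq_abs]
    push_cast
    field_simp

namespace MACH

variable {ι : Type*} [Fintype ι]

def averageSpectrum (x : ι → 𝕜) : 𝕜 :=
  1 / (Fintype.card ι : 𝕜) * ∑ i, x i

def averagePowerSpectrum (x : ι → 𝕜) : ℝ :=
  1 / (Fintype.card ι : ℝ) * ∑ i, ‖x i‖ ^ 2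

def averageSimilarity (x : ι → 𝕜) : ℝ :=
  averagePowerSpectrum fun i ↦ x i - averageSpectrum x

def filter (α β γ : ℝ) (x : ι → 𝕜) : 𝕜 :=
  averageSpectrum x / ((α + β * averagePowerSpectrum x + γ * averageSimilarity x : ℝ) : 𝕜)

theorem averageSpectrum_smul (a : 𝕜) (x : ι → 𝕜) :
    averageSpectrum (a • x) = a * averageSpectrum x := by
  simp only [averageSpectrum, Pi.smul_apply, smul_eq_mul, ← Finset.mul_sum]
  ring

theorem averagePowerSpectrum_smul (a : 𝕜) (x : ι → 𝕜) :
    averagePowerSpectrum (a • x) = ‖a‖ ^ 2 * averagePowerSpectrum x := by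
  simp only [averagePowerSpectrum, Pi.smul_apply, smul_eq_mul, norm_mul, mul_pow,
    ← Finset.mul_sum]
  ring

theorem averageSimilarity_smul (a : 𝕜) (x : ι → 𝕜) :
    averageSimilarity (a • x) = ‖a‖ ^ 2 * averageSimilarity x := by
  have hcentered : (fun i ↦ (a • x) i - averageSpectrum (a • x)) =
      a • fun i ↦ x i - averageSpectrum x := by
    ext i
    simp only [averageSpectrum_smul, Pi.smul_apply, smul_eq_mul]
    ring
  rw [averageSimilarity, hcentered, averagePowerSpectrum_smul, averageSimilarity]

theorem filter_smul (α β γ : ℝ) (a : 𝕜) (x : ι → 𝕜) :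
    filter (‖a‖ ^ 2 * α) β γ (a • x) = a / ((‖a‖ ^ 2 : ℝ) : 𝕜) * filter α β γ x := by
  have hden : ‖a‖ ^ 2 * α + β * averagePowerSpectrum (a • x) + γ * averageSimilarity (a • x) =
      ‖a‖ ^ 2 * (α + β * averagePowerSpectrum x + γ * averageSimilarity x) := by
    rw [averagePowerSpectrum_smul, averageSimilarity_smul]
    ring
  rw [filter, hden, averageSpectrum_smul, RCLike.ofReal_mul, mul_div_mul_comm, filter]

end MACH

end

theorem stmt_10_general (Ne : ℕ)
    (X : Fin Ne → EuclideanSpace ℝ (Fin 3) → ℂ)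
    (T : EuclideanSpace ℝ (Fin 3) → EuclideanSpace ℝ (Fin 3))
    (Δ : ℝ)
    (c : EuclideanSpace ℝ (Fin 3) → ℂ) (hc : ∀ u, ‖c u‖ = 1)
    (Xhat : Fin Ne → EuclideanSpace ℝ (Fin 3) → ℂ)
    (hXhat : ∀ i u, Xhat i u = c u * X i (T u) / ((|Δ| : ℝ) : ℂ))
    (α β γ : ℝ)
    (Mx Mxhat : EuclideanSpace ℝ (Fin 3) → ℂ)
    (hMx : ∀ u, Mx u = (1 / (Ne : ℂ)) * ∑ i, X i u)
    (hMxhat : ∀ u, Mxhat u = (1 / (Ne : ℂ)) * ∑ i, Xhat i u)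
    (Dx Dxhat : EuclideanSpace ℝ (Fin 3) → ℝ)
    (hDx : ∀ u, Dx u = (1 / (Ne : ℝ)) * ∑ i, ‖X i u‖ ^ 2)
    (hDxhat : ∀ u, Dxhat u = (1 / (Ne : ℝ)) * ∑ i, ‖Xhat i u‖ ^ 2)
    (Sx Sxhat : EuclideanSpace ℝ (Fin 3) → ℝ)
    (hSx : ∀ u, Sx u = (1 / (Ne : ℝ)) * ∑ i, ‖X i u - Mx u‖ ^ 2)
    (hSxhat : ∀ u, Sxhat u = (1 / (Ne : ℝ)) * ∑ i, ‖Xhat i u - Mxhat u‖ ^ 2)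
    (h hhat : EuclideanSpace ℝ (Fin 3) → ℂ)
    (hh : ∀ u, h u = Mx u / ((α + β * Dx u + γ * Sx u : ℝ) : ℂ))
    (αhat βhat γhat : ℝ)
    (hαhat : αhat = α / |Δ| ^ 2) (hβhat : βhat = β) (hγhat : γhat = γ)
    (hhhat : ∀ u, hhat u = Mxhat u / ((αhat + βhat * Dxhat u + γhat * Sxhat u : ℝ) : ℂ)) :
    ∀ u, hhat u = ((|Δ| : ℝ) : ℂ) * c u * h (T u) := by
  have hfilter : ∀ u, h u = MACH.filter α β γ (X · u) := by
    intro u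
    simp [hh, hMx, hDx, hSx, MACH.filter, MACH.averageSpectrum, MACH.averagePowerSpectrum,
      MACH.averageSimilarity]
  have hfilter_hat : ∀ u, hhat u = MACH.filter αhat βhat γhat (Xhat · u) := by
    intro u
    simp [hhhat, hMxhat, hDxhat, hSxhat, MACH.filter, MACH.averageSpectrum,
      MACH.averagePowerSpectrum, MACH.averageSimilarity]
  intro u
  have hXhat_smul : (Xhat · u) = (c u / ((|Δ| : ℝ) : ℂ)) • (X · (T u)) := by
    ext i
    rw [hXhat, Pi.smul_apply, smul_eq_mul, mul_div_right_comm]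
  have hαhat_eq : αhat = ‖c u / ((|Δ| : ℝ) : ℂ)‖ ^ 2 * α := by
    simp [hαhat, hc, div_eq_inv_mul]
  rw [hfilter_hat, hfilter, hXhat_smul, hαhat_eq, hβhat, hγhat, MACH.filter_smul,
    ← RCLike.ofReal_eq_complex_ofReal, div_ofReal_div_norm_sq (hc u) |Δ|]

theorem stmt_10 (Ne : ℕ) (hNe : 0 < Ne)
    (X : Fin Ne → EuclideanSpace ℝ (Fin 3) → ℂ)
    (T : EuclideanSpace ℝ (Fin 3) → EuclideanSpace ℝ (Fin 3))
    (Δ : ℝ) (hΔ : Δ ≠ 0)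
    (c : EuclideanSpace ℝ (Fin 3) → ℂ) (hc : ∀ u, ‖c u‖ = 1)
    (Xhat : Fin Ne → EuclideanSpace ℝ (Fin 3) → ℂ)
    (hXhat : ∀ i u, Xhat i u = c u * X i (T u) / ((|Δ| : ℝ) : ℂ))
    (α β γ : ℝ) (hα : 0 < α) (hβ : 0 ≤ β) (hγ : 0 ≤ γ)
    (Mx Mxhat : EuclideanSpace ℝ (Fin 3) → ℂ)
    (hMx : ∀ u, Mx u = (1 / (Ne : ℂ)) * ∑ i, X i u)
    (hMxhat : ∀ u, Mxhat u = (1 / (Ne : ℂ)) * ∑ i, Xhat i u)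
    (Dx Dxhat : EuclideanSpace ℝ (Fin 3) → ℝ)
    (hDx : ∀ u, Dx u = (1 / (Ne : ℝ)) * ∑ i, ‖X i u‖ ^ 2)
    (hDxhat : ∀ u, Dxhat u = (1 / (Ne : ℝ)) * ∑ i, ‖Xhat i u‖ ^ 2)
    (Sx Sxhat : EuclideanSpace ℝ (Fin 3) → ℝ)
    (hSx : ∀ u, Sx u = (1 / (Ne : ℝ)) * ∑ i, ‖X i u - Mx u‖ ^ 2)
    (hSxhat : ∀ u, Sxhat u = (1 / (Ne : ℝ)) * ∑ i, ‖Xhat i u - Mxhat u‖ ^ 2)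
    (h hhat : EuclideanSpace ℝ (Fin 3) → ℂ)
    (hh : ∀ u, h u = Mx u / ((α + β * Dx u + γ * Sx u : ℝ) : ℂ))
    (αhat βhat γhat : ℝ)
    (hαhat : αhat = α / |Δ| ^ 2) (hβhat : βhat = β) (hγhat : γhat = γ)
    (hhhat : ∀ u, hhat u = Mxhat u / ((αhat + βhat * Dxhat u + γhat * Sxhat u : ℝ) : ℂ)) :
    ∀ u, hhat u = ((|Δ| : ℝ) : ℂ) * c u * h (T u) :=
  stmt_10_general Ne X T Δ c hc Xhat hXhat α β γ Mx Mxhat hMx hMxhat Dx Dxhat hDx hDxhat Sx Sxhat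
    hSx hSxhat h hhat hh αhat βhat γhat hαhat hβhat hγhat hhhat
end

section
/- Let N_e be a positive natural number and let X₁, …, X_{N_e} : ℝ² × ℝ → ℂ. Let A : ℝ² → ℝ² be an invertible linear map with determinant Δ ≠ 0 and let b ∈ ℝ². Let α > 0, β ≥ 0, γ ≥ 0 be real parameters, and define M_x(u) = (1/N_e)·Σᵢ Xᵢ(u), D_x(u) = (1/N_e)·Σᵢ |Xᵢ(u)|², S_x(u) = (1/N_e)·Σᵢ |Xᵢ(u) − M_x(u)|², and the canonical-view MACH filter h(u) = M_x(u)/(α + β·D_x(u) + γ·S_x(u)). Define the transformed training spectra X̂ᵢ(u_s, u₃) = exp(2πi·⟨b, (A⁻¹)ᵀ u_s⟩) · Xᵢ((A⁻¹)ᵀ u_s, u₃)/|Δ|, the corresponding quantities M̂_x, D̂_x, Ŝ_x, and the compensated filter ĥ(u) = M̂_x(u)/(α̂ + β̂·D̂_x(u) + γ̂·Ŝ_x(u)) with α̂ = α/|Δ|², β̂ = β, γ̂ = γ. Assume h and ĥ are integrable on ℝ² × ℝ, and let H and Ĥ denote their inverse Fourier transforms on ℝ² × ℝ. Then for every spatial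 point x_s ∈ ℝ² and every t ∈ ℝ, Ĥ(x_s, t) = |Δ|² · H(A x_s + b, t). -/
/-!
Multiplying every training spectrum by a common factor `z` multiplies the mean by `z` and the
power and variance terms by `‖z‖²`, so once the noise weight is also scaled by `‖z‖²` the filter
is multiplied by `z / ‖z‖²`. For the transformed view `z` is a unimodular phase divided by `|Δ|`,
hence `ĥ(u_s, u₃) = |Δ| e^{2πi⟨b, B u_s⟩} h(B u_s, u₃)` with `B = (A⁻¹)ᵀ`. In the inverse Fourier
integral that phase merges with the kernel into `e^{2πi⟨B u_s, A x_s + b⟩}`, and the substitution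
`v_s = B u_s` contributes the second factor `|det B|⁻¹ = |Δ|`.
-/

open scoped RealInnerProductSpace
open MeasureTheory Complex Real

theorem LinearMap.det_adjoint {𝕜 E : Type*} [RCLike 𝕜] [NormedAddCommGroup E]
    [InnerProductSpace 𝕜 E] [FiniteDimensional 𝕜 E] (f : E →ₗ[𝕜] E) : (LinearMap.adjoint f).det = star f.det := by
  let v := stdOrthonormalBasis 𝕜 E
  rw [← det_toMatrix v.toBasis, ← det_toMatrix v.toBasis f, toMatrix_adjoint,
    Matrix.det_conjTranspose]

section ChangeOfVariables

variable {E F G : Type*} [NormedAddCommGroup E] [NormedSpace ℝ E] [FiniteDimensional ℝ E]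
  [MeasurableSpace E] [BorelSpace E] [NormedAddCommGroup G] [NormedSpace ℝ G]

theorem integral_comp_linearMap (μ : Measure E) [μ.IsAddHaarMeasure] {T : E →ₗ[ℝ] E}
    (hT : LinearMap.det T ≠ 0) (g : E → G) :
    ∫ x, g (T x) ∂μ = |(LinearMap.det T)⁻¹| • ∫ y, g y ∂μ := by
  let e : E ≃ᵐ E :=
    (T.equivOfDetNeZero hT).toContinuousLinearEquiv.toHomeomorph.toMeasurableEquiv
  change ∫ x, g (e x) ∂μ = _
  rw [← integral_map_equiv e g, show ⇑e = ⇑T from rfl,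
    Measure.map_linearMap_addHaar_eq_smul_addHaar μ hT, integral_smul_measure,
    ENNReal.toReal_ofReal (abs_nonneg _)]

variable [NormedAddCommGroup F] [NormedSpace ℝ F] [FiniteDimensional ℝ F]
  [MeasurableSpace F] [BorelSpace F]

theorem integral_comp_prodMap_id (μ : Measure E) [μ.IsAddHaarMeasure] (ν : Measure F)
    [ν.IsAddHaarMeasure] {T : E →ₗ[ℝ] E} (hT : LinearMap.det T ≠ 0) (g : E × F → G) :
    ∫ u, g (T u.1, u.2) ∂μ.prod ν = |(LinearMap.det T)⁻¹| • ∫ u, g u ∂μ.prod ν := by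
  have hdet : LinearMap.det (T.prodMap (LinearMap.id : F →ₗ[ℝ] F)) = LinearMap.det T := by
    rw [LinearMap.det_prodMap, LinearMap.det_id, mul_one]
  rw [← hdet]
  exact integral_comp_linearMap (μ.prod ν) (hdet ▸ hT) g

end ChangeOfVariables

section Modulation

variable {E : Type*} [NormedAddCommGroup E] [InnerProductSpace ℝ E] [FiniteDimensional ℝ E]

theorem inner_adjoint_symm_add_inner (A : E ≃ₗ[ℝ] E) (b xs us : E) :
    ⟪b, LinearMap.adjoint (A.symm : E →ₗ[ℝ] E) us⟫ + ⟪us, xs⟫ =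
      ⟪LinearMap.adjoint (A.symm : E →ₗ[ℝ] E) us, A xs + b⟫ := by
  rw [inner_add_right, LinearMap.adjoint_inner_left, LinearEquiv.coe_coe, A.symm_apply_apply,
    real_inner_comm b, add_comm]

variable [MeasureSpace E] [BorelSpace E] [(volume : Measure E).IsAddHaarMeasure]

theorem integral_modulated_comp_adjoint_symm (A : E ≃ₗ[ℝ] E) (b xs : E) (t : ℝ)
    (g : E × ℝ → ℂ) :
    ∫ u : E × ℝ, cexp (2 * π * I * ⟪b, LinearMap.adjoint (A.symm : E →ₗ[ℝ] E) u.1⟫) *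
        g (LinearMap.adjoint (A.symm : E →ₗ[ℝ] E) u.1, u.2) *
        cexp (2 * π * I * (⟪u.1, xs⟫ + u.2 * t)) =
      ((|LinearMap.det (A : E →ₗ[ℝ] E)| : ℝ) : ℂ) *
        ∫ v : E × ℝ, g v * cexp (2 * π * I * (⟪v.1, A xs + b⟫ + v.2 * t)) := by
  set B := LinearMap.adjoint (A.symm : E →ₗ[ℝ] E)
  have hB : LinearMap.det B = (LinearMap.det (A : E →ₗ[ℝ] E))⁻¹ := by
    rw [LinearMap.det_adjoint, star_trivial, LinearEquiv.det_coe_symm]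
  have hB0 : LinearMap.det B ≠ 0 := hB ▸ inv_ne_zero A.isUnit_det'.ne_zero
  let F : E × ℝ → ℂ := fun v ↦ g v * cexp (2 * π * I * (⟪v.1, A xs + b⟫ + v.2 * t))
  calc _ = ∫ u : E × ℝ, F (B u.1, u.2) := by
        refine integral_congr_ae (Filter.Eventually.of_forall fun u ↦ ?_)
        simp only [F, ← inner_adjoint_symm_add_inner A b xs u.1, B]
        rw [mul_right_comm, ← Complex.exp_add, mul_comm]
        congr 2
        push_cast
        ring
    _ = |(LinearMap.det B)⁻¹| • ∫ v, F v := integral_comp_prodMap_id volume volume hB0 F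
    _ = _ := by rw [hB, inv_inv, Complex.real_smul]

end Modulation

noncomputable section MACH

variable {ι : Type*} [Fintype ι]

def sampleMean (x : ι → ℂ) : ℂ := 1 / (Fintype.card ι : ℂ) * ∑ i, x i

def meanPower (x : ι → ℂ) : ℝ := 1 / (Fintype.card ι : ℝ) * ∑ i, ‖x i‖ ^ 2

def sampleVariance (x : ι → ℂ) : ℝ := 1 / (Fintype.card ι : ℝ) * ∑ i, ‖x i - sampleMean x‖ ^ 2

def machFilter (α β γ : ℝ) (x : ι → ℂ) : ℂ :=
  sampleMean x / ((α + β * meanPower x + γ * sampleVariance x : ℝ) : ℂ)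

theorem sampleMean_const_mul (z : ℂ) (x : ι → ℂ) :
    sampleMean (fun i ↦ z * x i) = z * sampleMean x := by
  rw [sampleMean, sampleMean, ← Finset.mul_sum, mul_left_comm]

theorem meanPower_const_mul (z : ℂ) (x : ι → ℂ) :
    meanPower (fun i ↦ z * x i) = ‖z‖ ^ 2 * meanPower x := by
  simp only [meanPower, norm_mul, mul_pow, ← Finset.mul_sum, mul_left_comm]

theorem sampleVariance_const_mul (z : ℂ) (x : ι → ℂ) :
    sampleVariance (fun i ↦ z * x i) = ‖z‖ ^ 2 * sampleVariance x := by
  simp only [sampleVariance, sampleMean_const_mul, ← mul_sub, norm_mul, mul_pow,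
    ← Finset.mul_sum, mul_left_comm]

theorem machFilter_const_mul (α β γ : ℝ) (z : ℂ) (x : ι → ℂ) :
    machFilter (‖z‖ ^ 2 * α) β γ (fun i ↦ z * x i) =
      z / ((‖z‖ ^ 2 : ℝ) : ℂ) * machFilter α β γ x := by
  rw [machFilter, machFilter, sampleMean_const_mul, meanPower_const_mul,
    sampleVariance_const_mul, ← mul_div_mul_comm]
  push_cast
  ring

theorem machFilter_phase_mul_div_abs (α β γ r : ℝ) {c : ℝ} (hc : c ≠ 0) (x : ι → ℂ) :
    machFilter (α / |c| ^ 2) β γ (fun i ↦ cexp (2 * π * I * r) * x i / |c|) =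
      |c| * (cexp (2 * π * I * r) * machFilter α β γ x) := by
  set z := cexp (2 * π * I * r) / |c|
  have hz : ‖z‖ ^ 2 = (|c| ^ 2)⁻¹ := by simp [z, Complex.norm_exp, inv_pow]
  have hc' : ((|c| : ℝ) : ℂ) ≠ 0 := by exact_mod_cast abs_ne_zero.mpr hc
  have hx : (fun i ↦ cexp (2 * π * I * r) * x i / |c|) = fun i ↦ z * x i :=
    funext fun i ↦ mul_div_right_comm _ _ _
  rw [hx, div_eq_inv_mul α, ← hz, machFilter_const_mul, hz]
  simp only [z]
  push_cast
  field_simp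

theorem machFilter_eq {n : ℕ} (α β γ : ℝ) (x : Fin n → ℂ) {M : ℂ} {D S : ℝ}
    (hM : M = 1 / (n : ℂ) * ∑ i, x i) (hD : D = 1 / (n : ℝ) * ∑ i, ‖x i‖ ^ 2)
    (hS : S = 1 / (n : ℝ) * ∑ i, ‖x i - M‖ ^ 2) :
    M / ((α + β * D + γ * S : ℝ) : ℂ) = machFilter α β γ x := by
  subst hM hD hS
  simp only [machFilter, sampleMean, meanPower, sampleVariance, Fintype.card_fin]

end MACH

theorem stmt_12_general (Ne : ℕ)
    (X : Fin Ne → EuclideanSpace ℝ (Fin 2) × ℝ → ℂ)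
    (A : EuclideanSpace ℝ (Fin 2) ≃ₗ[ℝ] EuclideanSpace ℝ (Fin 2))
    (Δ : ℝ)
    (hΔ : LinearMap.det (A : EuclideanSpace ℝ (Fin 2) →ₗ[ℝ] EuclideanSpace ℝ (Fin 2)) = Δ)
    (hΔ0 : Δ ≠ 0) (b : EuclideanSpace ℝ (Fin 2))
    (α β γ : ℝ)
    (Mx : EuclideanSpace ℝ (Fin 2) × ℝ → ℂ)
    (hMx : ∀ u, Mx u = (1 / (Ne : ℂ)) * ∑ i, X i u)
    (Dx : EuclideanSpace ℝ (Fin 2) × ℝ → ℝ)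
    (hDx : ∀ u, Dx u = (1 / (Ne : ℝ)) * ∑ i, ‖X i u‖ ^ 2)
    (Sx : EuclideanSpace ℝ (Fin 2) × ℝ → ℝ)
    (hSx : ∀ u, Sx u = (1 / (Ne : ℝ)) * ∑ i, ‖X i u - Mx u‖ ^ 2)
    (h : EuclideanSpace ℝ (Fin 2) × ℝ → ℂ)
    (hh : ∀ u, h u = Mx u / ((α + β * Dx u + γ * Sx u : ℝ) : ℂ))
    (Xhat : Fin Ne → EuclideanSpace ℝ (Fin 2) × ℝ → ℂ)
    (hXhat : ∀ i, ∀ us : EuclideanSpace ℝ (Fin 2), ∀ u3 : ℝ,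
      Xhat i (us, u3) =
        Complex.exp (2 * Real.pi * Complex.I *
          (⟪b, LinearMap.adjoint
            (A.symm : EuclideanSpace ℝ (Fin 2) →ₗ[ℝ] EuclideanSpace ℝ (Fin 2)) us⟫ : ℝ)) *
        X i (LinearMap.adjoint
            (A.symm : EuclideanSpace ℝ (Fin 2) →ₗ[ℝ] EuclideanSpace ℝ (Fin 2)) us, u3) /
        ((|Δ| : ℝ) : ℂ))
    (Mxhat : EuclideanSpace ℝ (Fin 2) × ℝ → ℂ)
    (hMxhat : ∀ u, Mxhat u = (1 / (Ne : ℂ)) * ∑ i, Xhat i u)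
    (Dxhat : EuclideanSpace ℝ (Fin 2) × ℝ → ℝ)
    (hDxhat : ∀ u, Dxhat u = (1 / (Ne : ℝ)) * ∑ i, ‖Xhat i u‖ ^ 2)
    (Sxhat : EuclideanSpace ℝ (Fin 2) × ℝ → ℝ)
    (hSxhat : ∀ u, Sxhat u = (1 / (Ne : ℝ)) * ∑ i, ‖Xhat i u - Mxhat u‖ ^ 2)
    (αhat βhat γhat : ℝ)
    (hαhat : αhat = α / |Δ| ^ 2) (hβhat : βhat = β) (hγhat : γhat = γ)
    (hhat : EuclideanSpace ℝ (Fin 2) × ℝ → ℂ)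
    (hhhat : ∀ u, hhat u = Mxhat u / ((αhat + βhat * Dxhat u + γhat * Sxhat u : ℝ) : ℂ))
    (H Hhat : EuclideanSpace ℝ (Fin 2) × ℝ → ℂ)
    (hH : ∀ xs : EuclideanSpace ℝ (Fin 2), ∀ t : ℝ,
      H (xs, t) = ∫ u : EuclideanSpace ℝ (Fin 2) × ℝ,
        h u * Complex.exp (2 * Real.pi * Complex.I * ((⟪u.1, xs⟫ : ℝ) + u.2 * t)))
    (hHhat : ∀ xs : EuclideanSpace ℝ (Fin 2), ∀ t : ℝ,
      Hhat (xs, t) = ∫ u : EuclideanSpace ℝ (Fin 2) × ℝ,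
        hhat u * Complex.exp (2 * Real.pi * Complex.I * ((⟪u.1, xs⟫ : ℝ) + u.2 * t))) :
    ∀ xs : EuclideanSpace ℝ (Fin 2), ∀ t : ℝ,
      Hhat (xs, t) = ((|Δ| ^ 2 : ℝ) : ℂ) * H (A xs + b, t) := by
  intro xs t
  set B := LinearMap.adjoint (A.symm : EuclideanSpace ℝ (Fin 2) →ₗ[ℝ] EuclideanSpace ℝ (Fin 2))
  have hhhat_eq : ∀ us u3, hhat (us, u3) =
      ((|Δ| : ℝ) : ℂ) * (cexp (2 * π * I * ⟪b, B us⟫) * h (B us, u3)) := fun us u3 ↦ by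
    rw [hhhat, machFilter_eq _ _ _ _ (hMxhat _) (hDxhat _) (hSxhat _), hh,
      machFilter_eq _ _ _ _ (hMx _) (hDx _) (hSx _), hαhat, hβhat, hγhat]
    simp only [hXhat]
    exact machFilter_phase_mul_div_abs α β γ _ hΔ0 _
  calc Hhat (xs, t)
      = ((|Δ| : ℝ) : ℂ) * ∫ u : EuclideanSpace ℝ (Fin 2) × ℝ, cexp (2 * π * I * ⟪b, B u.1⟫) *
          h (B u.1, u.2) * cexp (2 * π * I * (⟪u.1, xs⟫ + u.2 * t)) := by
        rw [hHhat, ← integral_const_mul]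
        refine integral_congr_ae (Filter.Eventually.of_forall fun ⟨us, u3⟩ ↦ ?_)
        simp only [hhhat_eq, mul_assoc]
    _ = ((|Δ| ^ 2 : ℝ) : ℂ) * H (A xs + b, t) := by
        rw [integral_modulated_comp_adjoint_symm, hΔ, hH]
        push_cast
        ring

theorem stmt_12 (Ne : ℕ) (hNe : 0 < Ne)
    (X : Fin Ne → EuclideanSpace ℝ (Fin 2) × ℝ → ℂ)
    (A : EuclideanSpace ℝ (Fin 2) ≃ₗ[ℝ] EuclideanSpace ℝ (Fin 2))
    (Δ : ℝ)
    (hΔ : LinearMap.det (A : EuclideanSpace ℝ (Fin 2) →ₗ[ℝ] EuclideanSpace ℝ (Fin 2)) = Δ)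
    (hΔ0 : Δ ≠ 0) (b : EuclideanSpace ℝ (Fin 2))
    (α β γ : ℝ) (hα : 0 < α) (hβ : 0 ≤ β) (hγ : 0 ≤ γ)
    (Mx : EuclideanSpace ℝ (Fin 2) × ℝ → ℂ)
    (hMx : ∀ u, Mx u = (1 / (Ne : ℂ)) * ∑ i, X i u)
    (Dx : EuclideanSpace ℝ (Fin 2) × ℝ → ℝ)
    (hDx : ∀ u, Dx u = (1 / (Ne : ℝ)) * ∑ i, ‖X i u‖ ^ 2)
    (Sx : EuclideanSpace ℝ (Fin 2) × ℝ → ℝ)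
    (hSx : ∀ u, Sx u = (1 / (Ne : ℝ)) * ∑ i, ‖X i u - Mx u‖ ^ 2)
    (h : EuclideanSpace ℝ (Fin 2) × ℝ → ℂ)
    (hh : ∀ u, h u = Mx u / ((α + β * Dx u + γ * Sx u : ℝ) : ℂ))
    (Xhat : Fin Ne → EuclideanSpace ℝ (Fin 2) × ℝ → ℂ)
    (hXhat : ∀ i, ∀ us : EuclideanSpace ℝ (Fin 2), ∀ u3 : ℝ,
      Xhat i (us, u3) =
        Complex.exp (2 * Real.pi * Complex.I *
          (⟪b, LinearMap.adjoint
            (A.symm : EuclideanSpace ℝ (Fin 2) →ₗ[ℝ] EuclideanSpace ℝ (Fin 2)) us⟫ : ℝ)) *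
        X i (LinearMap.adjoint
            (A.symm : EuclideanSpace ℝ (Fin 2) →ₗ[ℝ] EuclideanSpace ℝ (Fin 2)) us, u3) /
        ((|Δ| : ℝ) : ℂ))
    (Mxhat : EuclideanSpace ℝ (Fin 2) × ℝ → ℂ)
    (hMxhat : ∀ u, Mxhat u = (1 / (Ne : ℂ)) * ∑ i, Xhat i u)
    (Dxhat : EuclideanSpace ℝ (Fin 2) × ℝ → ℝ)
    (hDxhat : ∀ u, Dxhat u = (1 / (Ne : ℝ)) * ∑ i, ‖Xhat i u‖ ^ 2)
    (Sxhat : EuclideanSpace ℝ (Fin 2) × ℝ → ℝ)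
    (hSxhat : ∀ u, Sxhat u = (1 / (Ne : ℝ)) * ∑ i, ‖Xhat i u - Mxhat u‖ ^ 2)
    (αhat βhat γhat : ℝ)
    (hαhat : αhat = α / |Δ| ^ 2) (hβhat : βhat = β) (hγhat : γhat = γ)
    (hhat : EuclideanSpace ℝ (Fin 2) × ℝ → ℂ)
    (hhhat : ∀ u, hhat u = Mxhat u / ((αhat + βhat * Dxhat u + γhat * Sxhat u : ℝ) : ℂ))
    (hint : Integrable h) (hinthat : Integrable hhat)
    (H Hhat : EuclideanSpace ℝ (Fin 2) × ℝ → ℂ)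
    (hH : ∀ xs : EuclideanSpace ℝ (Fin 2), ∀ t : ℝ,
      H (xs, t) = ∫ u : EuclideanSpace ℝ (Fin 2) × ℝ,
        h u * Complex.exp (2 * Real.pi * Complex.I * ((⟪u.1, xs⟫ : ℝ) + u.2 * t)))
    (hHhat : ∀ xs : EuclideanSpace ℝ (Fin 2), ∀ t : ℝ,
      Hhat (xs, t) = ∫ u : EuclideanSpace ℝ (Fin 2) × ℝ,
        hhat u * Complex.exp (2 * Real.pi * Complex.I * ((⟪u.1, xs⟫ : ℝ) + u.2 * t))) :
    ∀ xs : EuclideanSpace ℝ (Fin 2), ∀ t : ℝ,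
      Hhat (xs, t) = ((|Δ| ^ 2 : ℝ) : ℂ) * H (A xs + b, t) :=
  stmt_12_general Ne X A Δ hΔ hΔ0 b α β γ Mx hMx Dx hDx Sx hSx h hh Xhat hXhat Mxhat hMxhat Dxhat
    hDxhat Sxhat hSxhat αhat βhat γhat hαhat hβhat hγhat hhat hhhat H Hhat hH hHhat
end
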